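/- arXiv:1909.00760 — 4 statements merged into one kernel-verified Lean document; each statement's English description precedes it below -/
import Mathlib

section
/- For every α ∈ (π/(2√3), 1) there exists a unique β ∈ (√3/2, 1) such that (1/(√3 β²))·(π/2 − 3·arccos(β) + 3β·√(1−β²)) = α. -/
/-!
The numerator `π/2 - 3 arccos β + 3β√(1-β²)` has derivative `6√(1-β²)`, so the coverage fraction
has derivative `(6 arccos β - π) / (√3 β³)`, which is negative exactly when `β > cos (π/6) = √3/2`.
Hence the fraction decreases strictly on `[√3/2, 1]` from `1` to `π/(2√3)`, and the intermediate
value theorem provides the unique preimage of each `α` in between.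
-/

open Real Set

noncomputable def coverageFraction (β : ℝ) : ℝ :=
  (1 / (√3 * β ^ 2)) * (π / 2 - 3 * arccos β + 3 * β * √(1 - β ^ 2))

lemma hasDerivAt_coverage_numerator {x : ℝ} (hx₁ : -1 < x) (hx₂ : x < 1) :
    HasDerivAt (fun y => π / 2 - 3 * arccos y + 3 * y * √(1 - y ^ 2)) (6 * √(1 - x ^ 2)) x := by
  have hpos : 0 < 1 - x ^ 2 := by nlinarith
  have hsqrt : HasDerivAt (fun y => √(1 - y ^ 2)) (-(2 * x) / (2 * √(1 - x ^ 2))) x := by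
    simpa using ((hasDerivAt_pow 2 x).const_sub 1).sqrt hpos.ne'
  refine ((((hasDerivAt_arccos hx₁.ne' hx₂.ne).const_mul 3).const_sub (π / 2)).fun_add
    (((hasDerivAt_id' x).const_mul 3).fun_mul hsqrt)).congr_deriv ?_
  have hne : √(1 - x ^ 2) ≠ 0 := (sqrt_pos.2 hpos).ne'
  field_simp
  rw [sq_sqrt hpos.le]
  ring

lemma hasDerivAt_coverageFraction {x : ℝ} (hx₀ : x ≠ 0) (hx₁ : -1 < x) (hx₂ : x < 1) :
    HasDerivAt coverageFraction ((6 * arccos x - π) / (√3 * x ^ 3)) x := by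
  have hden : HasDerivAt (fun y => √3 * y ^ 2) (√3 * (2 * x)) x := by
    simpa using (hasDerivAt_pow 2 x).const_mul √3
  refine (((hasDerivAt_const x (1 : ℝ)).fun_div hden (by positivity)).fun_mul
    (hasDerivAt_coverage_numerator hx₁ hx₂)).congr_deriv ?_
  field_simp
  ring

lemma continuousOn_coverageFraction : ContinuousOn coverageFraction {0}ᶜ := by
  unfold coverageFraction
  refine ContinuousOn.mul (continuousOn_const.div (by fun_prop) fun x hx => ?_) (by fun_prop)
  simpa using hx

lemma sqrt_three_div_two_lt_one : √3 / 2 < 1 := by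
  rw [div_lt_one two_pos, sqrt_lt' two_pos]
  norm_num

lemma arccos_sqrt_three_div_two : arccos (√3 / 2) = π / 6 := by
  rw [← cos_pi_div_six, arccos_cos (by positivity) (by linarith [pi_pos])]

lemma strictAntiOn_coverageFraction : StrictAntiOn coverageFraction (Icc (√3 / 2) 1) := by
  have hcont : ContinuousOn coverageFraction (Icc (√3 / 2) 1) :=
    continuousOn_coverageFraction.mono fun x hx => (lt_of_lt_of_le (by positivity) hx.1).ne'
  refine strictAntiOn_of_deriv_neg (convex_Icc _ _) hcont fun x hx => ?_
  rw [interior_Icc] at hx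
  have hx₀ : 0 < x := lt_trans (by positivity) hx.1
  rw [(hasDerivAt_coverageFraction hx₀.ne' (by linarith) hx.2).deriv]
  have harccos : arccos x < π / 6 := by
    rw [← arccos_sqrt_three_div_two]
    exact arccos_lt_arccos (by linarith [sqrt_nonneg 3]) hx.1 hx.2.le
  exact div_neg_of_neg_of_pos (by linarith) (by positivity)

lemma coverageFraction_sqrt_three_div_two : coverageFraction (√3 / 2) = 1 := by
  have h3 : √3 ^ 2 = 3 := sq_sqrt (by norm_num)
  have hsqrt : √(1 - (√3 / 2) ^ 2) = 1 / 2 := by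
    rw [div_pow, h3, sqrt_eq_iff_mul_self_eq] <;> norm_num
  rw [coverageFraction, arccos_sqrt_three_div_two, hsqrt]
  field_simp
  linear_combination (-6 * √3) * h3

lemma coverageFraction_one : coverageFraction 1 = π / (2 * √3) := by
  simp only [coverageFraction, arccos_one]
  ring

/-- For every α ∈ (π/(2√3), 1) there is a unique β ∈ (√3/2, 1) with coverage fraction α. -/
theorem coverage_fraction_bijective (α : ℝ) (hα : α ∈ Set.Ioo (π / (2 * Real.sqrt 3)) 1) :
    ∃! β : ℝ, β ∈ Set.Ioo (Real.sqrt 3 / 2) 1 ∧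
      (1 / (Real.sqrt 3 * β ^ 2)) *
        (π / 2 - 3 * Real.arccos β + 3 * β * Real.sqrt (1 - β ^ 2)) = α := by
  obtain ⟨β, hβ, rfl⟩ : α ∈ coverageFraction '' Ioo (√3 / 2) 1 := by
    refine intermediate_value_Ioo' sqrt_three_div_two_lt_one.le
      (continuousOn_coverageFraction.mono fun x hx => (lt_of_lt_of_le (by positivity) hx.1).ne') ?_
    rwa [coverageFraction_one, coverageFraction_sqrt_three_div_two]
  exact ⟨β, ⟨hβ, rfl⟩, fun γ hγ => strictAntiOn_coverageFraction.injOn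
    (Ioo_subset_Icc_self hγ.1) (Ioo_subset_Icc_self hβ) hγ.2⟩
end

section
/- For 0 < α ≤ π/(2√3), the minimum communication radius ensuring connectivity of the triangular lattice with coverage fraction α satisfies R_C_min = √(2π/(√3·α))·R_S ≥ 2R_S, with equality iff α = π/(2√3). -/
open Real

/-- For `0 < α ≤ π/(2√3)`, the minimum communication radius
`R_C_min = √(2π/(√3·α))·R_S` satisfies `R_C_min ≥ 2R_S`, with equality iff
`α = π/(2√3)`. -/
theorem min_comm_radius_nonoverlap (R_S α : ℝ) (hR : 0 < R_S)
    (hα0 : 0 < α) (hα : α ≤ π / (2 * Real.sqrt 3)) :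
    2 * R_S ≤ Real.sqrt (2 * π / (Real.sqrt 3 * α)) * R_S ∧
    (Real.sqrt (2 * π / (Real.sqrt 3 * α)) * R_S = 2 * R_S ↔
      α = π / (2 * Real.sqrt 3)) := by
  have h3 : (0:ℝ) < Real.sqrt 3 := Real.sqrt_pos.mpr (by norm_num)
  have hπ : (0:ℝ) < π := Real.pi_pos
  have hden : 0 < Real.sqrt 3 * α := mul_pos h3 hα0
  have hkey : 4 ≤ 2 * π / (Real.sqrt 3 * α) := by
    rw [le_div_iff₀ hden]
    have : Real.sqrt 3 * α ≤ π / 2 := by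
      have := mul_le_mul_of_nonneg_left hα h3.le
      calc Real.sqrt 3 * α ≤ Real.sqrt 3 * (π / (2 * Real.sqrt 3)) := this
        _ = π / 2 := by field_simp
    nlinarith
  have hsqrt : 2 ≤ Real.sqrt (2 * π / (Real.sqrt 3 * α)) := by
    have : Real.sqrt 4 ≤ Real.sqrt (2 * π / (Real.sqrt 3 * α)) :=
      Real.sqrt_le_sqrt hkey
    have h4 : Real.sqrt 4 = 2 := by
      rw [show (4:ℝ) = 2^2 by norm_num, Real.sqrt_sq (by norm_num)]
    linarith
  constructor
  · nlinarith
  · constructor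
    · intro h
      have h2 : Real.sqrt (2 * π / (Real.sqrt 3 * α)) = 2 :=
        mul_right_cancel₀ hR.ne' h
      have h4 : 2 * π / (Real.sqrt 3 * α) = 4 := by
        have := congrArg (· ^ 2) h2
        simpa [Real.sq_sqrt (by positivity : (0:ℝ) ≤ 2 * π / (Real.sqrt 3 * α))] using this.trans (by norm_num)
      have : 2 * π = 4 * (Real.sqrt 3 * α) := by
        field_simp at h4; linarith
      rw [eq_div_iff (by positivity : (2 * Real.sqrt 3) ≠ 0)]
      linarith
    · intro h
      subst h
      have hx : 2 * π / (Real.sqrt 3 * (π / (2 * Real.sqrt 3))) = 4 := by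
        rw [div_eq_iff (by positivity)]
        field_simp
        ring
      rw [hx, show (4:ℝ) = 2^2 by norm_num, Real.sqrt_sq (by norm_num)]
end

section
/- If √3·R_S ≤ d ≤ 2R_S and α = (1/(√3 β²))·(π/2 − 3 arccos β + 3β√(1−β²)) with β = d/(2R_S), then α ≥ π/(2√3) > 0.9; in particular, any triangular lattice deployment in the overlapping regime achieves coverage fraction strictly greater than 0.9. -/
open Real

private lemma poly_aux (β s A : ℝ) (hβ2 : β ≤ 1) (hβsq : 3/4 ≤ β ^ 2)
    (hβpos : 0 < β) (hsnn : 0 ≤ s) (hssq : s ^ 2 = 1 - β ^ 2)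
    (hA : A = π / 6 * s ^ 2 + β * s) :
    1 - A ^ 2 / 2 + A ^ 4 * (5/96) ≤ β := by
  have hpi_lb : (3.141592:ℝ) < π := Real.pi_gt_d6
  have hpi_ub : π < 3.15 := Real.pi_lt_d2
  have hβ1 : (0.866:ℝ) ≤ β := by nlinarith
  have hs_half : s ≤ 1/2 := by nlinarith
  have hAnn : 0 ≤ A := by rw [hA]; positivity
  have hβlb : 1 - s^2/2 - s^4/4 ≤ β := by
    nlinarith [sq_nonneg (β - (1 - s^2/2 - s^4/4)), sq_nonneg s, sq_nonneg (s*s)]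
  have hA_ub : A ≤ 1.262 * s := by
    nlinarith [mul_nonneg (sub_nonneg.mpr hpi_ub.le) (sq_nonneg s),
      mul_nonneg (sub_nonneg.mpr hβ2) hsnn,
      mul_nonneg (sub_nonneg.mpr hs_half) hsnn]
  have hpb : (0.9:ℝ) ≤ π / 3 * β := by nlinarith
  have hexp : A ^ 2 = (π/6)^2 * s^4 + π/3 * β * s^3 + β^2 * s^2 := by
    rw [hA]; ring
  have hA_lb : s^2 - s^4 + 0.9 * s^3 ≤ A^2 := by
    rw [hexp]
    nlinarith [mul_nonneg (sub_nonneg.mpr hpb) (pow_nonneg hsnn 3),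
      mul_nonneg (sq_nonneg (π/6)) (pow_nonneg hsnn 4)]
  have hA4 : A ^ 4 ≤ 2.54 * s^4 := by
    have h4 : A ^ 4 ≤ (1.262*s) ^ 4 := pow_le_pow_left₀ hAnn hA_ub 4
    have h5 : (1.262*s:ℝ) ^ 4 = 158532181921/62500000000 * s^4 := by ring
    nlinarith [pow_nonneg hsnn 4]
  nlinarith [pow_nonneg hsnn 3, pow_nonneg hsnn 4,
    mul_nonneg (pow_nonneg hsnn 3) (sub_nonneg.mpr hs_half)]

private lemma arccos_aux (β s : ℝ) (hβ2 : β ≤ 1) (hβsq : 3/4 ≤ β ^ 2)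
    (hβpos : 0 < β) (hsnn : 0 ≤ s) (hssq : s ^ 2 = 1 - β ^ 2) :
    Real.arccos β ≤ π / 6 * s ^ 2 + β * s := by
  have hpi_lb : (3.141592:ℝ) < π := Real.pi_gt_d6
  have hpi_ub : π < 3.15 := Real.pi_lt_d2
  have hs_half : s ≤ 1/2 := by nlinarith
  set A := π / 6 * s ^ 2 + β * s with hA
  have hAnn : 0 ≤ A := by rw [hA]; positivity
  have hAle1 : |A| ≤ 1 := by
    rw [abs_of_nonneg hAnn, hA]; nlinarith
  have hAle : A ≤ π := by rw [hA]; nlinarith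
  have hcos : Real.cos A ≤ β := by
    have hb := (abs_le.mp (Real.cos_bound hAle1)).2
    rw [abs_of_nonneg hAnn] at hb
    have hp := poly_aux β s A hβ2 hβsq hβpos hsnn hssq hA
    linarith
  have h := Real.monotone_arcsin hcos
  have h2 : Real.arccos β ≤ Real.arccos (Real.cos A) := by
    rw [Real.arccos, Real.arccos]; linarith
  rwa [Real.arccos_cos hAnn hAle] at h2

/-- Any triangular lattice deployment in the overlapping regime `√3·R_S ≤ d ≤ 2R_S`
achieves coverage fraction at least `π/(2√3) > 0.9`. -/
theorem overlap_regime_coverage_bound (R_S d : ℝ) (hR : 0 < R_S)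
    (hd1 : Real.sqrt 3 * R_S ≤ d) (hd2 : d ≤ 2 * R_S) :
    π / (2 * Real.sqrt 3) ≤
      (1 / (Real.sqrt 3 * (d / (2 * R_S)) ^ 2)) *
        (π / 2 - 3 * Real.arccos (d / (2 * R_S)) +
          3 * (d / (2 * R_S)) * Real.sqrt (1 - (d / (2 * R_S)) ^ 2)) ∧
    (0.9 : ℝ) < π / (2 * Real.sqrt 3) := by
  have h3 : (Real.sqrt 3) ^ 2 = 3 := Real.sq_sqrt (by norm_num)
  have h3pos : (0:ℝ) < Real.sqrt 3 := Real.sqrt_pos.mpr (by norm_num)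
  have h3lt : Real.sqrt 3 < 1.7453 := by
    rw [show (1.7453:ℝ) = Real.sqrt (1.7453^2) by rw [Real.sqrt_sq]; norm_num]
    exact Real.sqrt_lt_sqrt (by norm_num) (by norm_num)
  have h3gt : (1.732:ℝ) < Real.sqrt 3 := by
    rw [show (1.732:ℝ) = Real.sqrt (1.732^2) by rw [Real.sqrt_sq]; norm_num]
    exact Real.sqrt_lt_sqrt (by norm_num) (by norm_num)
  have hpi_lb : (3.141592:ℝ) < π := Real.pi_gt_d6
  constructor
  · set β := d / (2 * R_S) with hβdef
    have hβ1 : Real.sqrt 3 / 2 ≤ β := by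
      rw [hβdef, div_le_div_iff₀ (by norm_num) (by positivity)]
      nlinarith
    have hβ2 : β ≤ 1 := by
      rw [hβdef, div_le_one (by positivity)]; linarith
    have hβpos : 0 < β := lt_of_lt_of_le (by nlinarith) hβ1
    have hβsq : 3/4 ≤ β ^ 2 := by nlinarith
    set s := Real.sqrt (1 - β ^ 2) with hsdef
    have hsnn : 0 ≤ s := Real.sqrt_nonneg _
    have hssq : s ^ 2 = 1 - β ^ 2 := Real.sq_sqrt (by nlinarith)
    have harccos := arccos_aux β s hβ2 hβsq hβpos hsnn hssq
    have hkey : π / 2 * β ^ 2 ≤ π / 2 - 3 * Real.arccos β + 3 * β * s := by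
      nlinarith
    have heq : π / (2 * Real.sqrt 3) = (1 / (Real.sqrt 3 * β ^ 2)) * (π / 2 * β ^ 2) := by
      field_simp
    rw [heq]
    have hpos : 0 ≤ 1 / (Real.sqrt 3 * β ^ 2) := by positivity
    exact mul_le_mul_of_nonneg_left hkey hpos
  · rw [lt_div_iff₀ (by positivity)]
    nlinarith
end

section
/- In an equilateral triangular lattice of side d with d ≥ √3·R_S, no point of the plane is covered by three or more disks of radius R_S centered at lattice points; i.e., every point is covered by at most two sensors. -/
open Real Metric

/-! Distinct points of the triangular lattice of side `d` are at distance at least `|d|`, since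
`‖a v₁ + b v₂‖² = d² (a² + a b + b²)` and this quadratic form is at least `1` at nonzero integer
points. On the other hand, three points `p, q, r` within `ρ` of a common point `z` satisfy
`|p - q|² + |p - r|² + |q - r|² ≤ 3 (|z - p|² + |z - q|² + |z - r|²) < 9 ρ²`, so some pair is
closer than `√3 ρ`. -/

lemma one_le_sq_add_mul_add_sq {a b : ℤ} (h : a ≠ 0 ∨ b ≠ 0) : 1 ≤ a ^ 2 + a * b + b ^ 2 := by
  rcases h with ha | hb
  · have : 0 < a ^ 2 := by positivity
    nlinarith [sq_nonneg (a + 2 * b)]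
  · have : 0 < b ^ 2 := by positivity
    nlinarith [sq_nonneg (2 * a + b)]

def triangularLattice (d : ℝ) : Set (EuclideanSpace ℝ (Fin 2)) :=
  {p | ∃ m n : ℤ, p = (m : ℝ) • !₂[d, 0] + (n : ℝ) • !₂[d / 2, d * √3 / 2]}

lemma norm_sq_smul_add_smul_triangular (d a b : ℝ) :
    ‖a • !₂[d, 0] + b • !₂[d / 2, d * √3 / 2]‖ ^ 2 = d ^ 2 * (a ^ 2 + a * b + b ^ 2) := by
  rw [EuclideanSpace.norm_eq, sq_sqrt (by positivity)]
  simp only [Fin.sum_univ_two, PiLp.add_apply, PiLp.smul_apply, smul_eq_mul,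
    Matrix.cons_val_zero, Matrix.cons_val_one, norm_eq_abs, sq_abs]
  linear_combination (b * d / 2) ^ 2 * sq_sqrt (show (0 : ℝ) ≤ 3 by norm_num)

lemma abs_le_dist_of_mem_triangularLattice {d : ℝ} {x y : EuclideanSpace ℝ (Fin 2)}
    (hx : x ∈ triangularLattice d) (hy : y ∈ triangularLattice d) (hxy : x ≠ y) :
    |d| ≤ dist x y := by
  obtain ⟨m₁, n₁, rfl⟩ := hx
  obtain ⟨m₂, n₂, rfl⟩ := hy
  have hne : m₁ - m₂ ≠ 0 ∨ n₁ - n₂ ≠ 0 := by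
    by_contra! h
    obtain ⟨hm, hn⟩ := h
    exact hxy (by rw [sub_eq_zero.mp hm, sub_eq_zero.mp hn])
  have hform : (1 : ℝ) ≤ ((m₁ - m₂ : ℤ) : ℝ) ^ 2 + ((m₁ - m₂ : ℤ) : ℝ) * ((n₁ - n₂ : ℤ) : ℝ)
      + ((n₁ - n₂ : ℤ) : ℝ) ^ 2 := by
    exact_mod_cast one_le_sq_add_mul_add_sq hne
  have hdiff : (m₁ : ℝ) • !₂[d, 0] + (n₁ : ℝ) • !₂[d / 2, d * √3 / 2]
      - ((m₂ : ℝ) • !₂[d, 0] + (n₂ : ℝ) • !₂[d / 2, d * √3 / 2])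
      = ((m₁ - m₂ : ℤ) : ℝ) • !₂[d, 0] + ((n₁ - n₂ : ℤ) : ℝ) • !₂[d / 2, d * √3 / 2] := by
    push_cast
    module
  rw [dist_eq_norm, ← abs_norm, ← sq_le_sq, hdiff, norm_sq_smul_add_smul_triangular]
  nlinarith [sq_nonneg d]

section InnerProductSpace

variable {E : Type*} [NormedAddCommGroup E] [InnerProductSpace ℝ E]

lemma dist_sq_add_dist_sq_add_dist_sq_le (p q r z : E) :
    dist p q ^ 2 + dist p r ^ 2 + dist q r ^ 2
      ≤ 3 * (dist z p ^ 2 + dist z q ^ 2 + dist z r ^ 2) := by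
  have hpq : p - q = (z - q) - (z - p) := by abel
  have hpr : p - r = (z - r) - (z - p) := by abel
  have hqr : q - r = (z - r) - (z - q) := by abel
  simp only [dist_eq_norm, hpq, hpr, hqr]
  generalize z - p = a, z - q = b, z - r = c
  -- the two sides differ by exactly `‖a + b + c‖² = ‖3 z - p - q - r‖²`
  have hsum := sq_nonneg ‖a + b + c‖
  rw [norm_add_sq_real, norm_add_sq_real, inner_add_left] at hsum
  rw [norm_sub_sq_real, norm_sub_sq_real, norm_sub_sq_real, real_inner_comm a b,
    real_inner_comm a c, real_inner_comm b c]
  linarith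

lemma not_dist_lt_of_sqrt_three_mul_le {p q r z : E} {ρ δ : ℝ} (hδ : √3 * ρ ≤ δ)
    (hpq : δ ≤ dist p q) (hpr : δ ≤ dist p r) (hqr : δ ≤ dist q r) :
    ¬(dist z p < ρ ∧ dist z q < ρ ∧ dist z r < ρ) := by
  rintro ⟨hzp, hzq, hzr⟩
  have hρ : 0 < ρ := dist_nonneg.trans_lt hzp
  have hδρ : 3 * ρ ^ 2 ≤ δ ^ 2 := by
    have := pow_le_pow_left₀ (by positivity) hδ 2
    rwa [mul_pow, sq_sqrt (by norm_num)] at this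
  have hδ₀ : 0 ≤ δ := le_trans (by positivity) hδ
  have := dist_sq_add_dist_sq_add_dist_sq_le p q r z
  nlinarith [pow_le_pow_left₀ hδ₀ hpq 2, pow_le_pow_left₀ hδ₀ hpr 2, pow_le_pow_left₀ hδ₀ hqr 2,
    pow_lt_pow_left₀ hzp dist_nonneg two_ne_zero, pow_lt_pow_left₀ hzq dist_nonneg two_ne_zero,
    pow_lt_pow_left₀ hzr dist_nonneg two_ne_zero]

end InnerProductSpace

theorem at_most_two_coverage_general (R_S d : ℝ) (hd : Real.sqrt 3 * R_S ≤ d)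
    (v₁ v₂ : EuclideanSpace ℝ (Fin 2))
    (hv₁ : v₁ = (!₂[d, 0] : EuclideanSpace ℝ (Fin 2)))
    (hv₂ : v₂ = (!₂[d / 2, d * Real.sqrt 3 / 2] : EuclideanSpace ℝ (Fin 2)))
    (Λ : Set (EuclideanSpace ℝ (Fin 2)))
    (hΛ : Λ = {p | ∃ m n : ℤ, p = (m : ℝ) • v₁ + (n : ℝ) • v₂}) :
    ∀ z : EuclideanSpace ℝ (Fin 2), ∀ p ∈ Λ, ∀ q ∈ Λ, ∀ r ∈ Λ,
      p ≠ q → p ≠ r → q ≠ r →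
      ¬(dist z p < R_S ∧ dist z q < R_S ∧ dist z r < R_S) := by
  subst hv₁ hv₂ hΛ
  intro z p hp q hq r hr hpq hpr hqr
  exact not_dist_lt_of_sqrt_three_mul_le (hd.trans (le_abs_self d))
    (abs_le_dist_of_mem_triangularLattice hp hq hpq)
    (abs_le_dist_of_mem_triangularLattice hp hr hpr)
    (abs_le_dist_of_mem_triangularLattice hq hr hqr)

/-- In an equilateral triangular lattice of side `d ≥ √3·R_S`, no point of the plane lies
in the open sensing disks of three distinct lattice points: every point is covered by at
most two sensors. -/
theorem at_most_two_coverage (R_S d : ℝ) (hR : 0 < R_S) (hd : Real.sqrt 3 * R_S ≤ d)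
    (v₁ v₂ : EuclideanSpace ℝ (Fin 2))
    (hv₁ : v₁ = (!₂[d, 0] : EuclideanSpace ℝ (Fin 2)))
    (hv₂ : v₂ = (!₂[d / 2, d * Real.sqrt 3 / 2] : EuclideanSpace ℝ (Fin 2)))
    (Λ : Set (EuclideanSpace ℝ (Fin 2)))
    (hΛ : Λ = {p | ∃ m n : ℤ, p = (m : ℝ) • v₁ + (n : ℝ) • v₂}) :
    ∀ z : EuclideanSpace ℝ (Fin 2), ∀ p ∈ Λ, ∀ q ∈ Λ, ∀ r ∈ Λ,
      p ≠ q → p ≠ r → q ≠ r →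
      ¬(dist z p < R_S ∧ dist z q < R_S ∧ dist z r < R_S) :=
  at_most_two_coverage_general R_S d hd v₁ v₂ hv₁ hv₂ Λ hΛ
end
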